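/- For any finite abstract simplicial complex G, the Fredholm characteristic psi(G) = det(1+A(G')) is either 1 or -1; in particular the Fredholm matrix 1+A(G') is unimodular and its inverse is an integer matrix. -/

import Mathlib

/-!
Let `A` be the inclusion matrix `A x z = [z ⊆ x]` and `D` the diagonal matrix of the signs
`-(-1)^|z|`. Then `1 + A(G') = A D Aᵀ`: the `(x, y)` entry of the right side is the alternating
sum over the nonempty faces of `x ∩ y`, which is `1` if `x ∩ y` is nonempty and `0` otherwise.
Ordered by dimension, `A` is unitriangular, so `det (1 + A(G')) = det D = ±1`.
-/

open Finset Matrix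

theorem Finset.sum_powerset_filter_nonempty_neg_neg_one_pow_card {α R : Type*} [DecidableEq α]
    [CommRing R] (s : Finset α) :
    ∑ t ∈ s.powerset with t.Nonempty, -(-1 : R) ^ #t = if s.Nonempty then 1 else 0 := by
  have hterm (t : Finset α) : (if t.Nonempty then -(-1 : R) ^ #t else 0)
      = (if t = ∅ then 1 else 0) - (-1) ^ #t := by
    rcases t.eq_empty_or_nonempty with rfl | ht
    · simp
    · simp [ht, ht.ne_empty]
  have halt : ∑ t ∈ s.powerset, (-1 : R) ^ #t = if s = ∅ then 1 else 0 := by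
    exact_mod_cast congrArg (Int.cast : ℤ → R) sum_powerset_neg_one_pow_card
  rw [sum_filter, sum_congr rfl fun t _ => hterm t, sum_sub_distrib, sum_ite_eq',
    if_pos (empty_mem_powerset s), halt]
  rcases s.eq_empty_or_nonempty with rfl | hs
  · simp
  · simp [hs, hs.ne_empty]

section ConnectionMatrix

variable {V : Type*} [DecidableEq V] (R : Type*) [CommRing R] (G : Finset (Finset V))

/-- For a complex of nonempty simplices this is the Fredholm matrix `1 + A(G')`. -/
def connectionMatrix : Matrix G G R :=
  of fun x y => if ((x : Finset V) ∩ y).Nonempty then 1 else 0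

def inclusionMatrix : Matrix G G R :=
  of fun x z => if (z : Finset V) ⊆ x then 1 else 0

theorem inclusionMatrix_blockTriangular :
    (inclusionMatrix R G).BlockTriangular fun z => OrderDual.toDual #(z : Finset V) := by
  intro x z hlt
  have : ¬ (z : Finset V) ⊆ x := fun h => (card_le_card h).not_gt hlt
  simp only [inclusionMatrix, of_apply, if_neg this]

theorem det_inclusionMatrix : (inclusionMatrix R G).det = 1 := by
  rw [(inclusionMatrix_blockTriangular R G).det]
  refine prod_eq_one fun k _ => ?_
  suffices hblock :
      (inclusionMatrix R G).toSquareBlock (fun z => OrderDual.toDual #(z : Finset V)) k = 1 by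
    rw [hblock, det_one]
  ext ⟨x, hx⟩ ⟨z, hz⟩
  have hcard : #(z : Finset V) = #(x : Finset V) := OrderDual.toDual.injective (hz.trans hx.symm)
  have hsub_iff : (z : Finset V) ⊆ x ↔ x = z :=
    ⟨fun h => (Subtype.ext (eq_of_subset_of_card_le h hcard.ge)).symm,
      fun h => h ▸ subset_rfl⟩
  simp only [toSquareBlock_def, inclusionMatrix, of_apply, one_apply, hsub_iff, Subtype.mk.injEq]

variable {R G}

theorem filter_subset_eq_powerset_filter_nonempty (hne : ∀ x ∈ G, x.Nonempty)
    (hclosed : ∀ x ∈ G, ∀ y ⊆ x, y.Nonempty → y ∈ G) {x s : Finset V} (hx : x ∈ G)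
    (hs : s ⊆ x) : G.filter (· ⊆ s) = s.powerset.filter (·.Nonempty) := by
  ext t
  simp only [mem_filter, mem_powerset]
  exact ⟨fun ⟨htG, hts⟩ => ⟨hts, hne t htG⟩,
    fun ⟨hts, ht⟩ => ⟨hclosed x hx t (hts.trans hs) ht, hts⟩⟩

theorem connectionMatrix_eq_inclusionMatrix_mul (hne : ∀ x ∈ G, x.Nonempty)
    (hclosed : ∀ x ∈ G, ∀ y ⊆ x, y.Nonempty → y ∈ G) :
    connectionMatrix R G =
      inclusionMatrix R G * diagonal (fun z : G => -(-1) ^ #(z : Finset V)) *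
        (inclusionMatrix R G)ᵀ := by
  ext x y
  calc connectionMatrix R G x y
      = ∑ t ∈ ((x : Finset V) ∩ y).powerset with t.Nonempty, -(-1 : R) ^ #t := by
        rw [sum_powerset_filter_nonempty_neg_neg_one_pow_card]; rfl
    _ = ∑ z ∈ G with z ⊆ (x : Finset V) ∩ y, -(-1 : R) ^ #z := by
        rw [filter_subset_eq_powerset_filter_nonempty hne hclosed x.2 inter_subset_left]
    _ = ∑ z : G, if (z : Finset V) ⊆ x ∩ y then -(-1 : R) ^ #(z : Finset V) else 0 := by
        rw [sum_filter, ← sum_coe_sort G]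
    _ = _ := by
        rw [mul_apply]
        simp only [mul_diagonal, transpose_apply, inclusionMatrix, of_apply,
          subset_inter_iff, ite_mul, mul_ite, one_mul, mul_one, zero_mul, mul_zero, ite_and]
        exact sum_congr rfl fun z _ => by split_ifs <;> rfl

theorem isUnit_det_connectionMatrix (hne : ∀ x ∈ G, x.Nonempty)
    (hclosed : ∀ x ∈ G, ∀ y ⊆ x, y.Nonempty → y ∈ G) :
    IsUnit (connectionMatrix R G).det := by
  rw [connectionMatrix_eq_inclusionMatrix_mul hne hclosed, det_mul, det_mul, det_transpose,
    det_inclusionMatrix, det_diagonal, one_mul, mul_one, IsUnit.prod_univ_iff]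
  exact fun _ => (isUnit_neg_one.pow _).neg

end ConnectionMatrix

theorem fredholm_unimodular_general {V : Type*} [DecidableEq V]
    (G : Finset (Finset V))
    (hne : ∀ x ∈ G, x.Nonempty)
    (hclosed : ∀ x ∈ G, ∀ y ⊆ x, y.Nonempty → y ∈ G) :
    (Matrix.det (Matrix.of fun x y : {z // z ∈ G} =>
        if ((x : Finset V) ∩ (y : Finset V)).Nonempty then (1 : ℤ) else 0) = 1 ∨
     Matrix.det (Matrix.of fun x y : {z // z ∈ G} =>
        if ((x : Finset V) ∩ (y : Finset V)).Nonempty then (1 : ℤ) else 0) = -1) ∧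
    IsUnit (Matrix.of fun x y : {z // z ∈ G} =>
        if ((x : Finset V) ∩ (y : Finset V)).Nonempty then (1 : ℤ) else 0) := by
  have hdet : IsUnit (connectionMatrix ℤ G).det := isUnit_det_connectionMatrix hne hclosed
  exact ⟨Int.isUnit_iff.mp hdet, (isUnit_iff_isUnit_det _).mpr hdet⟩

/-- For any finite abstract simplicial complex `G`, the Fredholm characteristic
`psi G = det (1 + A(G'))` of the connection graph is `1` or `-1`; in particular
the Fredholm matrix `1 + A(G')` is unimodular (a unit in the ring of integer
matrices, hence with integer inverse). -/
theorem fredholm_unimodular {V : Type*} [Fintype V] [DecidableEq V]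
    (G : Finset (Finset V))
    (hne : ∀ x ∈ G, x.Nonempty)
    (hclosed : ∀ x ∈ G, ∀ y ⊆ x, y.Nonempty → y ∈ G) :
    (Matrix.det (Matrix.of fun x y : {z // z ∈ G} =>
        if ((x : Finset V) ∩ (y : Finset V)).Nonempty then (1 : ℤ) else 0) = 1 ∨
     Matrix.det (Matrix.of fun x y : {z // z ∈ G} =>
        if ((x : Finset V) ∩ (y : Finset V)).Nonempty then (1 : ℤ) else 0) = -1) ∧
    IsUnit (Matrix.of fun x y : {z // z ∈ G} =>
        if ((x : Finset V) ∩ (y : Finset V)).Nonempty then (1 : ℤ) else 0) :=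
  fredholm_unimodular_general G hne hclosed
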